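/- arXiv:1407.4963 — 6 statements merged into one kernel-verified Lean document; each statement's English description precedes it below -/
import Mathlib

section
/- If (L, [-,-], d) is a differential Lie algebra (d a derivation of the Lie bracket squaring to zero), then the derived bracket [x,y]_d := [dx, y] makes L into a left Leibniz algebra, i.e. [x,[y,z]_d]_d = [[x,y]_d,z]_d + [y,[x,z]_d]_d. -/
theorem apply_lie_apply_left_of_sq_eq_zero {L : Type*} [LieRing L] (d : L → L)
    (hd2 : ∀ x, d (d x) = 0) (hder : ∀ x y : L, d ⁅x, y⁆ = ⁅d x, y⁆ + ⁅x, d y⁆) (x y : L) :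
    d ⁅d x, y⁆ = ⁅d x, d y⁆ := by
  rw [hder, hd2, zero_lie, zero_add]

/-- The derived bracket `[x,y]_d := [dx, y]` of a differential Lie algebra
satisfies the left Leibniz identity. -/
theorem derived_bracket_leibniz {K L : Type*} [Field K] [LieRing L] [LieAlgebra K L]
    (d : L →ₗ[K] L) (hd2 : ∀ x, d (d x) = 0)
    (hder : ∀ x y : L, d ⁅x, y⁆ = ⁅d x, y⁆ + ⁅x, d y⁆) :
    ∀ x y z : L, ⁅d x, ⁅d y, z⁆⁆ = ⁅d ⁅d x, y⁆, z⁆ + ⁅d y, ⁅d x, z⁆⁆ := by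
  intro x y z
  rw [apply_lie_apply_left_of_sq_eq_zero d hd2 hder, leibniz_lie]
end

section
/- If 𝔥 is a Leibniz representation of the Lie algebra 𝔤 (with left and right actions), then 𝔞 = 𝔤 ⊕ 𝔥 with bracket [(g₁,h₁),(g₂,h₂)] := ([g₁,g₂], [g₁,h₂] + [h₁,g₂]) is a Leibniz algebra, and the projection to 𝔤 makes it an exact Courant algebra over 𝔤. -/
/-!
In the first component the bracket on `𝔤 × 𝔥` is that of `𝔤`. In the second component the
Leibniz identity splits, by bilinearity, into three pieces, one for each choice of the argument
lying in `𝔥`; these are exactly the three axioms of a Leibniz representation.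
-/

section Hemisemidirect

variable {R 𝔤 𝔥 : Type*} [CommRing R] [LieRing 𝔤] [Module R 𝔤] [AddCommGroup 𝔥] [Module R 𝔥]

structure IsLeibnizRepresentation (l : 𝔤 →ₗ[R] 𝔥 →ₗ[R] 𝔥) (r : 𝔥 →ₗ[R] 𝔤 →ₗ[R] 𝔥) : Prop where
  left_left : ∀ (x y : 𝔤) (m : 𝔥), l x (l y m) = l ⁅x, y⁆ m + l y (l x m)
  left_right : ∀ (x y : 𝔤) (m : 𝔥), l x (r m y) = r (l x m) y + r m ⁅x, y⁆
  right_lie : ∀ (x y : 𝔤) (m : 𝔥), r m ⁅x, y⁆ = r (r m x) y + l x (r m y)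

variable (l : 𝔤 →ₗ[R] 𝔥 →ₗ[R] 𝔥) (r : 𝔥 →ₗ[R] 𝔤 →ₗ[R] 𝔥)

def hemisemidirectBracket (a b : 𝔤 × 𝔥) : 𝔤 × 𝔥 :=
  (⁅a.1, b.1⁆, l a.1 b.2 + r a.2 b.1)

theorem fst_hemisemidirectBracket (a b : 𝔤 × 𝔥) :
    (hemisemidirectBracket l r a b).1 = ⁅a.1, b.1⁆ :=
  rfl

theorem hemisemidirectBracket_eq_zero_of_fst_eq_zero {a b : 𝔤 × 𝔥} (ha : a.1 = 0)
    (hb : b.1 = 0) : hemisemidirectBracket l r a b = 0 := by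
  simp [hemisemidirectBracket, ha, hb]

variable {l r}

theorem IsLeibnizRepresentation.hemisemidirectBracket_leibniz
    (h : IsLeibnizRepresentation l r) (a b c : 𝔤 × 𝔥) :
    hemisemidirectBracket l r a (hemisemidirectBracket l r b c) =
      hemisemidirectBracket l r (hemisemidirectBracket l r a b) c +
        hemisemidirectBracket l r b (hemisemidirectBracket l r a c) := by
  refine Prod.ext (leibniz_lie a.1 b.1 c.1) ?_
  simp only [hemisemidirectBracket, Prod.snd_add, map_add, LinearMap.add_apply]
  rw [h.left_left a.1 b.1 c.2, h.left_right a.1 c.1 b.2, h.right_lie b.1 c.1 a.2]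
  abel

end Hemisemidirect

/-- If `𝔥` is a Leibniz representation of the Lie algebra `𝔤` (with left action `l`
and right action `r`), then `𝔞 = 𝔤 ⊕ 𝔥` with bracket
`[(g₁,h₁),(g₂,h₂)] = ([g₁,g₂], [g₁,h₂] + [h₁,g₂])` is a Leibniz algebra, and the
projection to `𝔤` makes it an exact Courant algebra over `𝔤`. -/
theorem leibniz_hemisemidirect_exact_courant {K 𝔤 𝔥 : Type*} [Field K]
    [LieRing 𝔤] [LieAlgebra K 𝔤] [AddCommGroup 𝔥] [Module K 𝔥]
    (l : 𝔤 →ₗ[K] 𝔥 →ₗ[K] 𝔥) (r : 𝔥 →ₗ[K] 𝔤 →ₗ[K] 𝔥)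
    (hl : ∀ (x y : 𝔤) (m : 𝔥), l x (l y m) = l ⁅x, y⁆ m + l y (l x m))
    (hm : ∀ (x y : 𝔤) (m : 𝔥), l x (r m y) = r (l x m) y + r m ⁅x, y⁆)
    (hr : ∀ (x y : 𝔤) (m : 𝔥), r m ⁅x, y⁆ = r (r m x) y + l x (r m y))
    (br : (𝔤 × 𝔥) → (𝔤 × 𝔥) → (𝔤 × 𝔥))
    (hbr : ∀ a b : 𝔤 × 𝔥, br a b = (⁅a.1, b.1⁆, l a.1 b.2 + r a.2 b.1))
    (π : (𝔤 × 𝔥) → 𝔤) (hπ : ∀ a : 𝔤 × 𝔥, π a = a.1) :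
    (∀ a b c : 𝔤 × 𝔥, br a (br b c) = br (br a b) c + br b (br a c)) ∧
    (∀ a b : 𝔤 × 𝔥, π (br a b) = ⁅π a, π b⁆) ∧
    Function.Surjective π ∧
    (∀ a b : 𝔤 × 𝔥, π a = 0 → π b = 0 → br a b = 0) := by
  have hrep : IsLeibnizRepresentation l r := ⟨hl, hm, hr⟩
  obtain rfl : br = hemisemidirectBracket l r := funext₂ hbr
  obtain rfl : π = Prod.fst := funext hπ
  exact ⟨hrep.hemisemidirectBracket_leibniz, fst_hemisemidirectBracket l r,
    Prod.fst_surjective, fun _ _ ↦ hemisemidirectBracket_eq_zero_of_fst_eq_zero l r⟩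
end

section
/- For an exact Courant algebra π: 𝔞 → 𝔤 with 𝔥 = ker π, the brackets [g,h] := [a,h] and [h,g] := [h,a] for any a with π(a) = g are well-defined (independent of the choice of a) and endow 𝔥 with the structure of a Leibniz representation of 𝔤. -/
/-!
Two lifts of the same element of `𝔤` differ by an element of `𝔥 = ker π`, and `𝔥` is abelian,
so bracketing with `𝔥` does not see the choice of lift. Since `π` is a homomorphism, brackets
with `𝔥` stay in `𝔥`; the representation identities are instances of the Leibniz identity of `𝔞`.
-/

section KernelActions

variable {R A G : Type*} [CommRing R] [AddCommGroup A] [Module R A]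
  [AddCommGroup G] [Module R G] (br : A →ₗ[R] A →ₗ[R] A) (π : A →ₗ[R] G)

theorem bracket_left_eq_of_map_eq
    (habel : ∀ h₁ h₂ : A, π h₁ = 0 → π h₂ = 0 → br h₁ h₂ = 0)
    {a a' h : A} (haa' : π a = π a') (hh : π h = 0) : br a h = br a' h := by
  have hdiff : π (a - a') = 0 := by rw [map_sub, haa', sub_self]
  have hzero := habel (a - a') h hdiff hh
  rwa [map_sub, LinearMap.sub_apply, sub_eq_zero] at hzero

theorem bracket_right_eq_of_map_eq
    (habel : ∀ h₁ h₂ : A, π h₁ = 0 → π h₂ = 0 → br h₁ h₂ = 0)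
    {a a' h : A} (haa' : π a = π a') (hh : π h = 0) : br h a = br h a' := by
  have hdiff : π (a - a') = 0 := by rw [map_sub, haa', sub_self]
  have hzero := habel h (a - a') hh hdiff
  rwa [map_sub, sub_eq_zero] at hzero

end KernelActions

section KernelIdeal

variable {R A G : Type*} [CommRing R] [AddCommGroup A] [Module R A]
  [LieRing G] [Module R G] (br : A →ₗ[R] A →ₗ[R] A) (π : A →ₗ[R] G)

theorem map_bracket_left_eq_zero (hhom : ∀ x y : A, π (br x y) = ⁅π x, π y⁆)
    (a : A) {h : A} (hh : π h = 0) : π (br a h) = 0 := by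
  rw [hhom, hh, lie_zero]

theorem map_bracket_right_eq_zero (hhom : ∀ x y : A, π (br x y) = ⁅π x, π y⁆)
    (a : A) {h : A} (hh : π h = 0) : π (br h a) = 0 := by
  rw [hhom, hh, zero_lie]

end KernelIdeal

theorem exact_courant_kernel_representation_general {K 𝔤 𝔞 : Type*} [Field K]
    [LieRing 𝔤] [LieAlgebra K 𝔤] [AddCommGroup 𝔞] [Module K 𝔞]
    (br : 𝔞 →ₗ[K] 𝔞 →ₗ[K] 𝔞)
    (hleib : ∀ x y z : 𝔞, br x (br y z) = br (br x y) z + br y (br x z))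
    (π : 𝔞 →ₗ[K] 𝔤)
    (hhom : ∀ x y : 𝔞, π (br x y) = ⁅π x, π y⁆)
    (habel : ∀ h₁ h₂ : 𝔞, π h₁ = 0 → π h₂ = 0 → br h₁ h₂ = 0) :
    -- the actions are well defined (independent of the choice of lift)
    (∀ a a' h : 𝔞, π a = π a' → π h = 0 → br a h = br a' h ∧ br h a = br h a') ∧
    -- the actions take values in the kernel 𝔥
    (∀ a h : 𝔞, π h = 0 → π (br a h) = 0 ∧ π (br h a) = 0) ∧
    -- the Leibniz representation identities, with one variable in 𝔥
    (∀ a b h : 𝔞, π h = 0 →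
      br a (br b h) = br (br a b) h + br b (br a h) ∧
      br a (br h b) = br (br a h) b + br h (br a b) ∧
      br h (br a b) = br (br h a) b + br a (br h b)) :=
  ⟨fun _ _ _ haa' hh =>
      ⟨bracket_left_eq_of_map_eq br π habel haa' hh,
        bracket_right_eq_of_map_eq br π habel haa' hh⟩,
    fun a _ hh =>
      ⟨map_bracket_left_eq_zero br π hhom a hh, map_bracket_right_eq_zero br π hhom a hh⟩,
    fun a b h _ => ⟨hleib a b h, hleib a h b, hleib h a b⟩⟩

/-- For an exact Courant algebra `π : 𝔞 → 𝔤` with abelian kernel `𝔥 = ker π`, the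
brackets `[g,h] := [a,h]` and `[h,g] := [h,a]` (for any `a` with `π a = g`) are
well defined and endow `𝔥` with the structure of a Leibniz representation of `𝔤`. -/
theorem exact_courant_kernel_representation {K 𝔤 𝔞 : Type*} [Field K]
    [LieRing 𝔤] [LieAlgebra K 𝔤] [AddCommGroup 𝔞] [Module K 𝔞]
    (br : 𝔞 →ₗ[K] 𝔞 →ₗ[K] 𝔞)
    (hleib : ∀ x y z : 𝔞, br x (br y z) = br (br x y) z + br y (br x z))
    (π : 𝔞 →ₗ[K] 𝔤) (hsurj : Function.Surjective π)
    (hhom : ∀ x y : 𝔞, π (br x y) = ⁅π x, π y⁆)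
    (habel : ∀ h₁ h₂ : 𝔞, π h₁ = 0 → π h₂ = 0 → br h₁ h₂ = 0) :
    -- the actions are well defined (independent of the choice of lift)
    (∀ a a' h : 𝔞, π a = π a' → π h = 0 → br a h = br a' h ∧ br h a = br h a') ∧
    -- the actions take values in the kernel 𝔥
    (∀ a h : 𝔞, π h = 0 → π (br a h) = 0 ∧ π (br h a) = 0) ∧
    -- the Leibniz representation identities, with one variable in 𝔥
    (∀ a b h : 𝔞, π h = 0 →
      br a (br b h) = br (br a b) h + br b (br a h) ∧
      br a (br h b) = br (br a h) b + br h (br a b) ∧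
      br h (br a b) = br (br h a) b + br a (br h b)) :=
  exact_courant_kernel_representation_general br hleib π hhom habel
end

section
/- Let F be an automorphism of the exact Courant algebra π: 𝔞 → 𝔤 with kernel 𝔥 (π∘F = π and F restricts to the identity on 𝔥), and let q be a section of π. Then the map ψ: 𝔤 → 𝔥 defined by ψ(g) = F(q(g)) − q(g) is a Leibniz 1-cocycle: ψ([g₁,g₂]) = [g₁,ψ(g₂)] + [ψ(g₁),g₂] for all g₁,g₂ ∈ 𝔤. -/
/-!
Since `F` fixes `ker π`, the displacement `F x - x` depends only on `π x`. The elements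
`q ⁅g₁, g₂⁆` and `br (q g₁) (q g₂)` both lie over `⁅g₁, g₂⁆`, so `ψ ⁅g₁, g₂⁆` is the displacement
of `br (q g₁) (q g₂)`. As `F` preserves the bracket, this is
`br (q g₁ + ψ g₁) (q g₂ + ψ g₂) - br (q g₁) (q g₂)`, and expanding bilinearly leaves the two
cocycle terms plus `br (ψ g₁) (ψ g₂)`, which vanishes because the kernel is abelian.
-/

theorem LinearMap.map₂_sub_map₂ {R M N P : Type*} [CommRing R] [AddCommGroup M] [Module R M]
    [AddCommGroup N] [Module R N] [AddCommGroup P] [Module R P] (f : M →ₗ[R] N →ₗ[R] P)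
    (a a' : M) (b b' : N) :
    f a' b' - f a b = f a (b' - b) + f (a' - a) b + f (a' - a) (b' - b) := by
  simp only [map_sub, LinearMap.sub_apply]
  abel

theorem LinearMap.map_sub_self_eq_of_eq_on_ker {R M N : Type*} [Ring R] [AddCommGroup M]
    [Module R M] [AddCommGroup N] [Module R N] {π : M →ₗ[R] N} {F : M →ₗ[R] M}
    (hFker : ∀ x : M, π x = 0 → F x = x) {x y : M} (hxy : π x = π y) :
    F x - x = F y - y := by
  have hdiff := hFker (x - y) (by rw [map_sub, hxy, sub_self])
  rw [map_sub] at hdiff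
  exact sub_eq_sub_iff_sub_eq_sub.mp hdiff

theorem automorphism_gives_one_cocycle_general {K 𝔤 𝔞 : Type*} [Field K]
    [LieRing 𝔤] [LieAlgebra K 𝔤] [AddCommGroup 𝔞] [Module K 𝔞]
    (br : 𝔞 →ₗ[K] 𝔞 →ₗ[K] 𝔞)
    (π : 𝔞 →ₗ[K] 𝔤)
    (hhom : ∀ x y : 𝔞, π (br x y) = ⁅π x, π y⁆)
    (habel : ∀ h₁ h₂ : 𝔞, π h₁ = 0 → π h₂ = 0 → br h₁ h₂ = 0)
    (q : 𝔤 →ₗ[K] 𝔞) (hq : ∀ g : 𝔤, π (q g) = g)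
    (F : 𝔞 →ₗ[K] 𝔞)
    (hFbr : ∀ x y : 𝔞, F (br x y) = br (F x) (F y))
    (hFπ : ∀ x : 𝔞, π (F x) = π x)
    (hFker : ∀ x : 𝔞, π x = 0 → F x = x)
    (ψ : 𝔤 → 𝔞) (hψ : ∀ g : 𝔤, ψ g = F (q g) - q g) :
    (∀ g : 𝔤, π (ψ g) = 0) ∧
    (∀ g₁ g₂ : 𝔤, ψ ⁅g₁, g₂⁆ = br (q g₁) (ψ g₂) + br (ψ g₁) (q g₂)) := by
  have hπψ : ∀ g : 𝔤, π (ψ g) = 0 := fun g => by rw [hψ, map_sub, hFπ, sub_self]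
  refine ⟨hπψ, fun g₁ g₂ => ?_⟩
  have hlift : π (q ⁅g₁, g₂⁆) = π (br (q g₁) (q g₂)) := by rw [hhom, hq, hq, hq]
  rw [hψ, LinearMap.map_sub_self_eq_of_eq_on_ker hFker hlift, hFbr, LinearMap.map₂_sub_map₂,
    ← hψ, ← hψ, habel _ _ (hπψ g₁) (hπψ g₂), add_zero]

/-- An automorphism `F` of an exact Courant algebra `π : 𝔞 → 𝔤` (with `π ∘ F = π`
and `F` the identity on the kernel `𝔥`) determines, via a section `q`, a Leibniz
1-cocycle `ψ(g) = F(q g) - q g`: it satisfies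
`ψ(⁅g₁,g₂⁆) = [g₁, ψ g₂] + [ψ g₁, g₂]`. -/
theorem automorphism_gives_one_cocycle {K 𝔤 𝔞 : Type*} [Field K]
    [LieRing 𝔤] [LieAlgebra K 𝔤] [AddCommGroup 𝔞] [Module K 𝔞]
    (br : 𝔞 →ₗ[K] 𝔞 →ₗ[K] 𝔞)
    (hleib : ∀ x y z : 𝔞, br x (br y z) = br (br x y) z + br y (br x z))
    (π : 𝔞 →ₗ[K] 𝔤) (hsurj : Function.Surjective π)
    (hhom : ∀ x y : 𝔞, π (br x y) = ⁅π x, π y⁆)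
    (habel : ∀ h₁ h₂ : 𝔞, π h₁ = 0 → π h₂ = 0 → br h₁ h₂ = 0)
    (q : 𝔤 →ₗ[K] 𝔞) (hq : ∀ g : 𝔤, π (q g) = g)
    (F : 𝔞 →ₗ[K] 𝔞)
    (hFbr : ∀ x y : 𝔞, F (br x y) = br (F x) (F y))
    (hFπ : ∀ x : 𝔞, π (F x) = π x)
    (hFker : ∀ x : 𝔞, π x = 0 → F x = x)
    (ψ : 𝔤 → 𝔞) (hψ : ∀ g : 𝔤, ψ g = F (q g) - q g) :
    (∀ g : 𝔤, π (ψ g) = 0) ∧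
    (∀ g₁ g₂ : 𝔤, ψ ⁅g₁, g₂⁆ = br (q g₁) (ψ g₂) + br (ψ g₁) (q g₂)) :=
  automorphism_gives_one_cocycle_general br π hhom habel q hq F hFbr hFπ hFker ψ hψ
end

section
/- The group of automorphisms of a given exact Courant algebra π: 𝔞 → 𝔤 with kernel 𝔥 is in one-to-one correspondence with the space of Leibniz 1-cocycles HL¹(𝔤;𝔥) = {ψ: 𝔤 → 𝔥 linear | ψ([x,y]) = [x,ψ(y)] + [ψ(x),y]}. -/
/-!
An automorphism `F` moves each element by something in `𝔥 = ker π` and is the identity on `𝔥`,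
so `F - id` factors through `π` as `ψ ∘ π` with `ψ = F ∘ q - q`, i.e. `F = id + ψ ∘ π`.
Conversely, for any `ψ : 𝔤 → 𝔥` the map `id + ψ ∘ π` is invertible with inverse `id - ψ ∘ π`.
Since `𝔥` is abelian, `[x, h]` and `[h, x]` depend only on `π x` for `h ∈ 𝔥`; expanding the
bracket then shows that `id + ψ ∘ π` is a Leibniz morphism exactly when `ψ` is a 1-cocycle.
-/

namespace ExactCourantAlgebra

variable {K 𝔤 𝔞 : Type*} [CommRing K] [LieRing 𝔤] [LieAlgebra K 𝔤] [AddCommGroup 𝔞]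
  [Module K 𝔞]

variable (br : 𝔞 →ₗ[K] 𝔞 →ₗ[K] 𝔞) (π : 𝔞 →ₗ[K] 𝔤)

def IsAut (F : 𝔞 ≃ₗ[K] 𝔞) : Prop :=
  (∀ x y : 𝔞, F (br x y) = br (F x) (F y)) ∧ (∀ x : 𝔞, π (F x) = π x) ∧
    (∀ x : 𝔞, π x = 0 → F x = x)

def IsCocycle (q ψ : 𝔤 →ₗ[K] 𝔞) : Prop :=
  (∀ g : 𝔤, π (ψ g) = 0) ∧
    ∀ g₁ g₂ : 𝔤, ψ ⁅g₁, g₂⁆ = br (q g₁) (ψ g₂) + br (ψ g₁) (q g₂)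

def shear (ψ : 𝔤 →ₗ[K] 𝔞) (hψ : ∀ g, π (ψ g) = 0) : 𝔞 ≃ₗ[K] 𝔞 :=
  LinearEquiv.ofLinearMap (LinearMap.id + ψ ∘ₗ π) (LinearMap.id - ψ ∘ₗ π)
    (by ext x; simp [hψ]) (by ext x; simp [hψ])

variable {br π}

theorem br_congr_left_of_ker (habel : ∀ h₁ h₂ : 𝔞, π h₁ = 0 → π h₂ = 0 → br h₁ h₂ = 0)
    {x x' h : 𝔞} (hx : π x = π x') (hh : π h = 0) : br x h = br x' h := by
  have : br (x - x') h = 0 := habel _ _ (by rw [map_sub, hx, sub_self]) hh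
  rwa [map_sub, LinearMap.sub_apply, sub_eq_zero] at this

theorem br_congr_right_of_ker (habel : ∀ h₁ h₂ : 𝔞, π h₁ = 0 → π h₂ = 0 → br h₁ h₂ = 0)
    {x x' h : 𝔞} (hx : π x = π x') (hh : π h = 0) : br h x = br h x' := by
  have : br h (x - x') = 0 := habel _ _ hh (by rw [map_sub, hx, sub_self])
  rwa [map_sub, sub_eq_zero] at this

theorem shear_apply (ψ : 𝔤 →ₗ[K] 𝔞) (hψ : ∀ g, π (ψ g) = 0) (x : 𝔞) :
    shear π ψ hψ x = x + ψ (π x) :=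
  rfl

theorem shear_apply_sub_self (q ψ : 𝔤 →ₗ[K] 𝔞) (hq : ∀ g, π (q g) = g)
    (hψ : ∀ g, π (ψ g) = 0) (g : 𝔤) : shear π ψ hψ (q g) - q g = ψ g := by
  rw [shear_apply, hq, add_sub_cancel_left]

theorem map_br_shear_iff (hhom : ∀ x y : 𝔞, π (br x y) = ⁅π x, π y⁆)
    (habel : ∀ h₁ h₂ : 𝔞, π h₁ = 0 → π h₂ = 0 → br h₁ h₂ = 0)
    (q ψ : 𝔤 →ₗ[K] 𝔞) (hq : ∀ g, π (q g) = g) (hψ : ∀ g, π (ψ g) = 0) :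
    (∀ x y, shear π ψ hψ (br x y) = br (shear π ψ hψ x) (shear π ψ hψ y)) ↔
      ∀ g₁ g₂, ψ ⁅g₁, g₂⁆ = br (q g₁) (ψ g₂) + br (ψ g₁) (q g₂) := by
  have expand : ∀ x y, br (shear π ψ hψ x) (shear π ψ hψ y) - br x y =
      br (q (π x)) (ψ (π y)) + br (ψ (π x)) (q (π y)) := fun x y => by
    simp only [shear_apply, map_add, LinearMap.add_apply]
    rw [habel _ _ (hψ _) (hψ _), br_congr_left_of_ker habel (hq _).symm (hψ _),
      br_congr_right_of_ker habel (hq _).symm (hψ _)]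
    abel
  have key : ∀ x y, shear π ψ hψ (br x y) = br (shear π ψ hψ x) (shear π ψ hψ y) ↔
      ψ ⁅π x, π y⁆ = br (q (π x)) (ψ (π y)) + br (ψ (π x)) (q (π y)) := fun x y => by
    rw [shear_apply (x := br x y), hhom, ← eq_sub_iff_add_eq', expand]
  refine ⟨fun h g₁ g₂ => ?_, fun hc x y => (key x y).2 (hc _ _)⟩
  simpa only [hq] using (key _ _).1 (h (q g₁) (q g₂))

theorem eq_shear_of_isAut (q : 𝔤 →ₗ[K] 𝔞) (hq : ∀ g, π (q g) = g) {F : 𝔞 ≃ₗ[K] 𝔞}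
    (hπ : ∀ x, π (F x) = π x) (hfix : ∀ x, π x = 0 → F x = x) :
    F = shear π ((F : 𝔞 →ₗ[K] 𝔞) ∘ₗ q - q) (fun g => by simp [hπ, hq]) := by
  refine LinearEquiv.ext fun x => ?_
  have hx : F (x - q (π x)) = x - q (π x) := hfix _ (by simp [hq])
  rw [map_sub, sub_eq_iff_eq_add] at hx
  rw [shear_apply, hx]
  simp only [LinearMap.sub_apply, LinearMap.coe_comp, LinearEquiv.coe_coe, Function.comp_apply]
  abel

theorem isCocycle_of_isAut (hhom : ∀ x y : 𝔞, π (br x y) = ⁅π x, π y⁆)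
    (habel : ∀ h₁ h₂ : 𝔞, π h₁ = 0 → π h₂ = 0 → br h₁ h₂ = 0)
    (q : 𝔤 →ₗ[K] 𝔞) (hq : ∀ g, π (q g) = g) {F : 𝔞 ≃ₗ[K] 𝔞} (hF : IsAut br π F) :
    IsCocycle br π q ((F : 𝔞 →ₗ[K] 𝔞) ∘ₗ q - q) := by
  obtain ⟨hbr, hπ, hfix⟩ := hF
  have hψ : ∀ g, π (((F : 𝔞 →ₗ[K] 𝔞) ∘ₗ q - q) g) = 0 := fun g => by simp [hπ, hq]
  refine ⟨hψ, (map_br_shear_iff hhom habel q _ hq hψ).1 ?_⟩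
  rwa [← eq_shear_of_isAut q hq hπ hfix]

theorem isAut_shear (hhom : ∀ x y : 𝔞, π (br x y) = ⁅π x, π y⁆)
    (habel : ∀ h₁ h₂ : 𝔞, π h₁ = 0 → π h₂ = 0 → br h₁ h₂ = 0)
    (q : 𝔤 →ₗ[K] 𝔞) (hq : ∀ g, π (q g) = g) {ψ : 𝔤 →ₗ[K] 𝔞} (hψ : IsCocycle br π q ψ) :
    IsAut br π (shear π ψ hψ.1) :=
  ⟨(map_br_shear_iff hhom habel q ψ hq hψ.1).2 hψ.2,
    fun x => by rw [shear_apply, map_add, hψ.1, add_zero],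
    fun x hx => by rw [shear_apply, hx, map_zero, add_zero]⟩

def autEquivCocycles (hhom : ∀ x y : 𝔞, π (br x y) = ⁅π x, π y⁆)
    (habel : ∀ h₁ h₂ : 𝔞, π h₁ = 0 → π h₂ = 0 → br h₁ h₂ = 0)
    (q : 𝔤 →ₗ[K] 𝔞) (hq : ∀ g, π (q g) = g) :
    {F // IsAut br π F} ≃ {ψ // IsCocycle br π q ψ} where
  toFun F := ⟨(F.1 : 𝔞 →ₗ[K] 𝔞) ∘ₗ q - q, isCocycle_of_isAut hhom habel q hq F.2⟩
  invFun ψ := ⟨shear π ψ.1 ψ.2.1, isAut_shear hhom habel q hq ψ.2⟩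
  left_inv F := Subtype.ext (eq_shear_of_isAut q hq F.2.2.1 F.2.2.2).symm
  right_inv ψ := Subtype.ext (LinearMap.ext (shear_apply_sub_self q ψ.1 hq ψ.2.1))

end ExactCourantAlgebra

theorem automorphisms_equiv_one_cocycles_general {K 𝔤 𝔞 : Type*} [Field K]
    [LieRing 𝔤] [LieAlgebra K 𝔤] [AddCommGroup 𝔞] [Module K 𝔞]
    (br : 𝔞 →ₗ[K] 𝔞 →ₗ[K] 𝔞)
    (π : 𝔞 →ₗ[K] 𝔤)
    (hhom : ∀ x y : 𝔞, π (br x y) = ⁅π x, π y⁆)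
    (habel : ∀ h₁ h₂ : 𝔞, π h₁ = 0 → π h₂ = 0 → br h₁ h₂ = 0)
    (q : 𝔤 →ₗ[K] 𝔞) (hq : ∀ g : 𝔤, π (q g) = g) :
    ∃ e : { F : 𝔞 ≃ₗ[K] 𝔞 //
              (∀ x y : 𝔞, F (br x y) = br (F x) (F y)) ∧
              (∀ x : 𝔞, π (F x) = π x) ∧
              (∀ x : 𝔞, π x = 0 → F x = x) } ≃
          { ψ : 𝔤 →ₗ[K] 𝔞 //
              (∀ g : 𝔤, π (ψ g) = 0) ∧
              (∀ g₁ g₂ : 𝔤, ψ ⁅g₁, g₂⁆ = br (q g₁) (ψ g₂) + br (ψ g₁) (q g₂)) },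
      ∀ F g, (e F).1 g = F.1 (q g) - q g := by
  exact ⟨ExactCourantAlgebra.autEquivCocycles hhom habel q hq, fun _ _ => rfl⟩

/-- The group of automorphisms of an exact Courant algebra `π : 𝔞 → 𝔤` with kernel
`𝔥` is in one-to-one correspondence with the space `HL¹(𝔤;𝔥)` of Leibniz
1-cocycles, via `F ↦ (g ↦ F(q g) - q g)` for a fixed section `q`. -/
theorem automorphisms_equiv_one_cocycles {K 𝔤 𝔞 : Type*} [Field K]
    [LieRing 𝔤] [LieAlgebra K 𝔤] [AddCommGroup 𝔞] [Module K 𝔞]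
    (br : 𝔞 →ₗ[K] 𝔞 →ₗ[K] 𝔞)
    (hleib : ∀ x y z : 𝔞, br x (br y z) = br (br x y) z + br y (br x z))
    (π : 𝔞 →ₗ[K] 𝔤) (hsurj : Function.Surjective π)
    (hhom : ∀ x y : 𝔞, π (br x y) = ⁅π x, π y⁆)
    (habel : ∀ h₁ h₂ : 𝔞, π h₁ = 0 → π h₂ = 0 → br h₁ h₂ = 0)
    (q : 𝔤 →ₗ[K] 𝔞) (hq : ∀ g : 𝔤, π (q g) = g) :
    ∃ e : { F : 𝔞 ≃ₗ[K] 𝔞 //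
              (∀ x y : 𝔞, F (br x y) = br (F x) (F y)) ∧
              (∀ x : 𝔞, π (F x) = π x) ∧
              (∀ x : 𝔞, π x = 0 → F x = x) } ≃
          { ψ : 𝔤 →ₗ[K] 𝔞 //
              (∀ g : 𝔤, π (ψ g) = 0) ∧
              (∀ g₁ g₂ : 𝔤, ψ ⁅g₁, g₂⁆ = br (q g₁) (ψ g₂) + br (ψ g₁) (q g₂)) },
      ∀ F g, (e F).1 g = F.1 (q g) - q g :=
  automorphisms_equiv_one_cocycles_general br π hhom habel q hq
end

section
/- The composition of two automorphisms F, F′ of an exact Courant algebra corresponds to the sum of the associated 1-cocycles: if ψ_F(g) = F(q(g)) − q(g), then ψ_{F∘F′} = ψ_F + ψ_{F′}; hence the automorphism group of an exact Courant algebra is abelian and isomorphic as a group to the additive group of Leibniz 1-cocycles. -/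
/-!
Write an automorphism as `F = id + D`. Since `π ∘ F = π`, the map `D = F - id` takes values in
`𝔥 = ker π`, and since `F` fixes `𝔥`, we get `D ∘ D' = 0`. Hence
`F ∘ F' = id + D + D' + D ∘ D' = id + D + D'`, which is symmetric in `F` and `F'`.
-/

section KernelFixing

variable {M N Φ E : Type*} [AddCommGroup M] [AddCommGroup N]
  [FunLike Φ M N] [AddMonoidHomClass Φ M N] [FunLike E M M]
  {π : Φ} {F F' : E}

theorem map_apply_sub_self_eq_zero (hFπ : ∀ x, π (F x) = π x) (x : M) : π (F x - x) = 0 := by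
  rw [map_sub, hFπ, sub_self]

theorem apply_apply_sub_self [AddMonoidHomClass E M M] (hFker : ∀ x, π x = 0 → F x = x)
    (hF'π : ∀ x, π (F' x) = π x) (x : M) : F (F' x) - x = (F x - x) + (F' x - x) := by
  have hF_fixes : F (F' x - x) = F' x - x := hFker _ (map_apply_sub_self_eq_zero hF'π x)
  calc F (F' x) - x = F (x + (F' x - x)) - x := by rw [add_sub_cancel]
    _ = (F x - x) + (F' x - x) := by rw [map_add, hF_fixes]; abel

theorem apply_apply_comm [AddMonoidHomClass E M M] (hFπ : ∀ x, π (F x) = π x)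
    (hFker : ∀ x, π x = 0 → F x = x) (hF'π : ∀ x, π (F' x) = π x)
    (hF'ker : ∀ x, π x = 0 → F' x = x) (x : M) :
    F (F' x) = F' (F x) :=
  sub_left_inj.mp <| by
    rw [apply_apply_sub_self hFker hF'π, apply_apply_sub_self hF'ker hFπ, add_comm]

end KernelFixing

theorem automorphism_composition_adds_cocycles_general {K 𝔤 𝔞 : Type*} [Field K]
    [LieRing 𝔤] [LieAlgebra K 𝔤] [AddCommGroup 𝔞] [Module K 𝔞]
    (π : 𝔞 →ₗ[K] 𝔤)
    (q : 𝔤 →ₗ[K] 𝔞)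
    (F F' : 𝔞 ≃ₗ[K] 𝔞)
    (hFπ : ∀ x : 𝔞, π (F x) = π x)
    (hFker : ∀ x : 𝔞, π x = 0 → F x = x)
    (hF'π : ∀ x : 𝔞, π (F' x) = π x)
    (hF'ker : ∀ x : 𝔞, π x = 0 → F' x = x) :
    (∀ g : 𝔤, F (F' (q g)) - q g = (F (q g) - q g) + (F' (q g) - q g)) ∧
    (∀ x : 𝔞, F (F' x) = F' (F x)) :=
  ⟨fun g => apply_apply_sub_self hFker hF'π (q g), apply_apply_comm hFπ hFker hF'π hF'ker⟩

/-- Composition of automorphisms of an exact Courant algebra corresponds to the sum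
of the associated 1-cocycles: `ψ_{F∘F'} = ψ_F + ψ_{F'}`, where
`ψ_F(g) = F(q g) - q g`; in particular automorphisms commute, so the automorphism
group is abelian (and, by the bijection with 1-cocycles, it is isomorphic as a
group to the additive group of Leibniz 1-cocycles). -/
theorem automorphism_composition_adds_cocycles {K 𝔤 𝔞 : Type*} [Field K]
    [LieRing 𝔤] [LieAlgebra K 𝔤] [AddCommGroup 𝔞] [Module K 𝔞]
    (br : 𝔞 →ₗ[K] 𝔞 →ₗ[K] 𝔞)
    (hleib : ∀ x y z : 𝔞, br x (br y z) = br (br x y) z + br y (br x z))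
    (π : 𝔞 →ₗ[K] 𝔤) (hsurj : Function.Surjective π)
    (hhom : ∀ x y : 𝔞, π (br x y) = ⁅π x, π y⁆)
    (habel : ∀ h₁ h₂ : 𝔞, π h₁ = 0 → π h₂ = 0 → br h₁ h₂ = 0)
    (q : 𝔤 →ₗ[K] 𝔞) (hq : ∀ g : 𝔤, π (q g) = g)
    (F F' : 𝔞 ≃ₗ[K] 𝔞)
    (hFbr : ∀ x y : 𝔞, F (br x y) = br (F x) (F y))
    (hFπ : ∀ x : 𝔞, π (F x) = π x)
    (hFker : ∀ x : 𝔞, π x = 0 → F x = x)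
    (hF'br : ∀ x y : 𝔞, F' (br x y) = br (F' x) (F' y))
    (hF'π : ∀ x : 𝔞, π (F' x) = π x)
    (hF'ker : ∀ x : 𝔞, π x = 0 → F' x = x) :
    (∀ g : 𝔤, F (F' (q g)) - q g = (F (q g) - q g) + (F' (q g) - q g)) ∧
    (∀ x : 𝔞, F (F' x) = F' (F x)) :=
  automorphism_composition_adds_cocycles_general π q F F' hFπ hFker hF'π hF'ker
end
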